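/- There exists an edge-labeled rooted phylogenetic tree (T, λ) whose explained Fitch map ε satisfies: for every leaf x there is a leaf y ≠ x with ε(x,y) = ∅, yet no tree explaining ε satisfies condition (C). Concretely, the tree ((x,y),(x',y')) with empty labels on the four cherry edges and nonempty label I on the two edges incident to the root provides such an example. -/
import Mathlib


/-- A rooted phylogenetic tree with leaf set `L`: a finite vertex type `V`,
a root, a parent map (the root is its own parent), every vertex reaches the
root by iterating `parent`, the leaves are exactly the vertices without
children and are in bijection with `L`, and every inner vertex has at least
two children. -/
structure PhyloTree (L : Type) : Type 1 where
  V : Type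
  fintypeV : Fintype V
  root : V
  parent : V → V
  leaf : L → V
  parent_root : parent root = root
  reach : ∀ v : V, ∃ n : ℕ, parent^[n] v = root
  leaf_inj : Function.Injective leaf
  leaf_iff : ∀ v : V, (∀ u : V, parent u = v → u = v) ↔ ∃ x : L, leaf x = v
  phylo : ∀ v : V, (¬ ∃ x : L, leaf x = v) →
      ∃ u u' : V, u ≠ u' ∧ parent u = v ∧ parent u' = v ∧ u ≠ v ∧ u' ≠ v

namespace PhyloTree

variable {L : Type} (T : PhyloTree L)

/-- `v` is an ancestor (or equal) of `w`. -/
def anc (v w : T.V) : Prop := ∃ n : ℕ, T.parent^[n] w = v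

def isLeaf (v : T.V) : Prop := ∃ x : L, T.leaf x = v

/-- The cluster `L(T(v))`: the set of leaves below `v`. -/
def cluster (v : T.V) : Set L := {x : L | T.anc v (T.leaf x)}

/-- The cluster system `H(T)`. -/
def clusters : Set (Set L) := Set.range T.cluster

/-- `w` is the last common ancestor of the leaves `x` and `y`. -/
def isLCA (x y : L) (w : T.V) : Prop :=
  T.anc w (T.leaf x) ∧ T.anc w (T.leaf y) ∧
    ∀ u : T.V, T.anc u (T.leaf x) → T.anc u (T.leaf y) → T.anc u w

/-- `u` is a child of `v`. -/
def childOf (u v : T.V) : Prop := T.parent u = v ∧ u ≠ v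

/-- The edge `{parent u, u}` (encoded by its lower endpoint `u`) is an inner edge. -/
def innerEdge (u : T.V) : Prop := T.parent u ≠ u ∧ ¬ T.isLeaf u

/-- The edge `{parent u, u}` lies on the path from the vertex `w` down to the leaf `y`. -/
def onPath (w : T.V) (y : L) (u : T.V) : Prop :=
  T.anc w u ∧ u ≠ w ∧ T.anc u (T.leaf y)

/-- The vertex-labeled tree `(T,t)` explains `δ`. -/
def ExplainsDelta {M : Type} (t : T.V → M) (δ : L → L → M) : Prop :=
  ∀ x y : L, x ≠ y → ∀ w : T.V, T.isLCA x y w → t w = δ x y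

/-- The edge-labeled tree `(T,λ)` explains `ε`; edge labels are encoded on the
lower endpoint of each edge. -/
def ExplainsEps {N : Type} (lam : T.V → Finset N) (ε : L → L → Finset N) : Prop :=
  ∀ x y : L, x ≠ y → ∀ w : T.V, T.isLCA x y w →
    ∀ k : N, k ∈ ε x y ↔ ∃ u : T.V, T.onPath w y u ∧ k ∈ lam u

/-- The vertex labeling is discriminating: the endpoints of every inner edge
carry distinct labels. -/
def Discriminating {M : Type} (t : T.V → M) : Prop :=
  ∀ u : T.V, T.innerEdge u → t u ≠ t (T.parent u)

/-- Total number of labels over all edges, `Σ_{e ∈ E(T)} |λ(e)|`. -/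
noncomputable def labelSum {N : Type} (lam : T.V → Finset N) : ℕ :=
  letI := T.fintypeV
  letI := Classical.decEq T.V
  ∑ v : T.V, if T.parent v = v then 0 else (lam v).card

/-- Condition (C): every inner vertex has a child joined by an empty-labeled edge. -/
def CondC {N : Type} (lam : T.V → Finset N) : Prop :=
  ∀ v : T.V, ¬ T.isLeaf v → ∃ u : T.V, T.childOf u v ∧ lam u = ∅

/-- Condition (C1): if `t(v) ∈ M₀` then all edges from `v` to its children are empty. -/
def CondC1 {M N : Type} (t : T.V → M) (lam : T.V → Finset N) (M0 : Set M) : Prop :=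
  ∀ v u : T.V, T.childOf u v → t v ∈ M0 → lam u = ∅

/-- Condition (C2): at every vertex, at most one edge to a child is nonempty. -/
def CondC2 {N : Type} (lam : T.V → Finset N) : Prop :=
  ∀ v u u' : T.V, T.childOf u v → T.childOf u' v → lam u ≠ ∅ → lam u' ≠ ∅ → u = u'

/-- `(T1,λ1) ≤ (T2,λ2)`: the edge-labeled tree `(T2,λ2)` refines `(T1,λ1)`. -/
def LeLabeled {N : Type} (T1 : PhyloTree L) (lam1 : T1.V → Finset N)
    (T2 : PhyloTree L) (lam2 : T2.V → Finset N) : Prop :=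
  T1.clusters ⊆ T2.clusters ∧
    ∀ (v1 : T1.V) (v2 : T2.V), T1.parent v1 ≠ v1 → T2.parent v2 ≠ v2 →
      T1.cluster v1 = T2.cluster v2 → lam1 v1 ⊆ lam2 v2

/-- `φ` witnesses that `T'` is obtained from `T` by contracting the inner edge
`{parent u, u}`. -/
def IsContractionMap (T : PhyloTree L) (u : T.V) (T' : PhyloTree L)
    (φ : T.V → T'.V) : Prop :=
  T.innerEdge u ∧ Function.Surjective φ ∧ φ u = φ (T.parent u) ∧
    (∀ a b : T.V, φ a = φ b →
      a = b ∨ (a = u ∧ b = T.parent u) ∨ (b = u ∧ a = T.parent u)) ∧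
    (∀ v : T.V, v ≠ u → T'.parent (φ v) = φ (T.parent v)) ∧
    (∀ x : L, φ (T.leaf x) = T'.leaf x) ∧ φ T.root = T'.root

/-- `T'` is obtained from `T` by contracting the inner edge `{parent u, u}`. -/
def ContractEdge (T : PhyloTree L) (u : T.V) (T' : PhyloTree L) : Prop :=
  ∃ φ : T.V → T'.V, IsContractionMap T u T' φ

/-- Isomorphism of rooted trees on the same leaf set. -/
def Isomorphic (T1 T2 : PhyloTree L) : Prop :=
  ∃ φ : T1.V ≃ T2.V, (∀ v : T1.V, φ (T1.parent v) = T2.parent (φ v)) ∧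
    ∀ x : L, φ (T1.leaf x) = T2.leaf x

def IsSymbolicUltrametric {M : Type} (δ : L → L → M) : Prop :=
  ∃ (T : PhyloTree L) (t : T.V → M), T.ExplainsDelta t δ

def IsFitchMap {N : Type} (ε : L → L → Finset N) : Prop :=
  ∃ (T : PhyloTree L) (lam : T.V → Finset N), T.ExplainsEps lam ε

def TreeLike {M N : Type} (δ : L → L → M) (ε : L → L → Finset N) : Prop :=
  ∃ (T : PhyloTree L) (t : T.V → M) (lam : T.V → Finset N),
    T.ExplainsDelta t δ ∧ T.ExplainsEps lam ε

def MTreeLike {M N : Type} (δ : L → L → M) (ε : L → L → Finset N) (M0 : Set M) : Prop :=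
  ∃ (T : PhyloTree L) (t : T.V → M) (lam : T.V → Finset N),
    T.ExplainsDelta t δ ∧ T.ExplainsEps lam ε ∧ T.CondC lam ∧ T.CondC1 t lam M0

end PhyloTree

/-- A hierarchy on `L`. -/
def IsHierarchy {L : Type} (H : Set (Set L)) : Prop :=
  Set.univ ∈ H ∧ (∀ x : L, {x} ∈ H) ∧
    (∀ A ∈ H, ∀ B ∈ H, A ∩ B = A ∨ A ∩ B = B ∨ A ∩ B = (∅ : Set L)) ∧
    (∅ : Set L) ∉ H

namespace PhyloTree

variable {L : Type} (T : PhyloTree L)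

lemma anc_refl (v : T.V) : T.anc v v := ⟨0, rfl⟩

lemma anc_trans {a b c : T.V} (h1 : T.anc a b) (h2 : T.anc b c) : T.anc a c := by
  obtain ⟨n, hn⟩ := h1; obtain ⟨m, hm⟩ := h2
  exact ⟨n + m, by rw [Function.iterate_add_apply, hm, hn]⟩

lemma iterate_root (n : ℕ) : T.parent^[n] T.root = T.root := by
  induction n with
  | zero => rfl
  | succ n ih => rw [Function.iterate_succ_apply', ih, T.parent_root]

lemma anc_antisymm {v w : T.V} (h1 : T.anc v w) (h2 : T.anc w v) : v = w := by
  obtain ⟨n, hn⟩ := h1; obtain ⟨m, hm⟩ := h2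
  rcases Nat.eq_zero_or_pos n with h0 | h0
  · subst h0; exact hn.symm
  · have hper : T.parent^[m + n] w = w := by
      rw [Function.iterate_add_apply, hn, hm]
    have hk : ∀ k, T.parent^[(m + n) * k] w = w := by
      intro k
      induction k with
      | zero => rfl
      | succ k ih =>
        have : (m + n) * (k + 1) = (m + n) * k + (m + n) := by ring
        rw [this, Function.iterate_add_apply, hper, ih]
    obtain ⟨N, hN⟩ := T.reach w
    have hwroot : w = T.root := by
      have h1 : T.parent^[(m + n) * N] w = w := hk N
      have h2 : N ≤ (m + n) * N := Nat.le_mul_of_pos_left N (by omega)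
      calc w = T.parent^[(m + n) * N] w := h1.symm
        _ = T.parent^[(m + n) * N - N] (T.parent^[N] w) := by
            rw [← Function.iterate_add_apply]
            congr 1
            omega
        _ = T.root := by rw [hN, T.iterate_root]
    have : v = T.root := by rw [← hn, hwroot, T.iterate_root]
    rw [this, hwroot]

lemma anc_comp {u w z : T.V} (h1 : T.anc u z) (h2 : T.anc w z) :
    T.anc u w ∨ T.anc w u := by
  obtain ⟨n, hn⟩ := h1; obtain ⟨m, hm⟩ := h2
  rcases le_total m n with h | h
  · left
    refine ⟨n - m, ?_⟩
    rw [← hm, ← Function.iterate_add_apply, show n - m + m = n from by omega, hn]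
  · right
    refine ⟨m - n, ?_⟩
    rw [← hn, ← Function.iterate_add_apply, show m - n + n = m from by omega, hm]

lemma lca_exists (x y : L) : ∃ w, T.isLCA x y w := by
  classical
  have hroot : T.anc T.root (T.leaf y) := by
    obtain ⟨m, hm⟩ := T.reach (T.leaf y); exact ⟨m, hm⟩
  have hex : ∃ n, T.anc (T.parent^[n] (T.leaf x)) (T.leaf y) := by
    obtain ⟨n, hn⟩ := T.reach (T.leaf x)
    exact ⟨n, by rw [hn]; exact hroot⟩
  refine ⟨T.parent^[Nat.find hex] (T.leaf x), ⟨Nat.find hex, rfl⟩, Nat.find_spec hex, ?_⟩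
  intro u hux huy
  obtain ⟨m, hm⟩ := hux
  by_cases h : Nat.find hex ≤ m
  · refine ⟨m - Nat.find hex, ?_⟩
    rw [← Function.iterate_add_apply, show m - Nat.find hex + Nat.find hex = m from by omega, hm]
  · exact absurd (show T.anc (T.parent^[m] (T.leaf x)) (T.leaf y) from by rw [hm]; exact huy)
      (Nat.find_min hex (by omega))

lemma isLCA_symm {x y : L} {w : T.V} (h : T.isLCA x y w) : T.isLCA y x w :=
  ⟨h.2.1, h.1, fun u h1 h2 => h.2.2 u h2 h1⟩

lemma descend {N : Type} {lam : T.V → Finset N} (hC : T.CondC lam) (v : T.V) :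
    ∃ z : L, T.anc v (T.leaf z) ∧
      ∀ u, T.anc v u → u ≠ v → T.anc u (T.leaf z) → lam u = ∅ := by
  haveI := T.fintypeV
  have key : ∀ n (v : T.V), Set.ncard {u | T.anc v u} ≤ n →
      ∃ z : L, T.anc v (T.leaf z) ∧
        ∀ u, T.anc v u → u ≠ v → T.anc u (T.leaf z) → lam u = ∅ := by
    intro n
    induction n with
    | zero =>
      intro v hv
      exfalso
      have hne : ({u | T.anc v u} : Set T.V).Nonempty := ⟨v, T.anc_refl v⟩
      have := (Set.ncard_pos (Set.toFinite _)).mpr hne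
      omega
    | succ n ih =>
      intro v hv
      by_cases hleaf : T.isLeaf v
      · obtain ⟨x, hx⟩ := hleaf
        refine ⟨x, by rw [hx]; exact T.anc_refl v, ?_⟩
        intro u h1 h2 h3
        rw [hx] at h3
        exact absurd (T.anc_antisymm h1 h3) (Ne.symm h2)
      · obtain ⟨c, ⟨hcp, hcv⟩, hclam⟩ := hC v hleaf
        have hvc : T.anc v c := ⟨1, by simpa using hcp⟩
        have hcard : Set.ncard {u | T.anc c u} ≤ n := by
          have hsub : {u | T.anc c u} ⊂ {u | T.anc v u} := by
            constructor
            · intro u hu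
              exact T.anc_trans hvc hu
            · intro hcon
              have hcvanc : T.anc c v := hcon (T.anc_refl v)
              exact hcv (T.anc_antisymm hcvanc hvc)
          have := Set.ncard_lt_ncard hsub (Set.toFinite _)
          omega
        obtain ⟨z, hz1, hz2⟩ := ih c hcard
        refine ⟨z, T.anc_trans hvc hz1, ?_⟩
        intro u h1 h2 h3
        rcases T.anc_comp h3 hz1 with h | h
        · obtain ⟨m, hm⟩ := h
          rcases m with _ | m
          · have : c = u := hm
            rw [← this]; exact hclam
          · have huv : T.anc u v := by
              refine ⟨m, ?_⟩
              rw [← hcp, ← Function.iterate_succ_apply]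
              exact hm
            exact absurd (T.anc_antisymm h1 huv) (Ne.symm h2)
        · by_cases huc : u = c
          · rw [huc]; exact hclam
          · exact hz2 u h huc h3
  exact key _ v le_rfl

lemma emptyPath {N : Type} {lam : T.V → Finset N} {ε : L → L → Finset N}
    (hexp : T.ExplainsEps lam ε) {i j : L} {w : T.V} (hne : i ≠ j)
    (hw : T.isLCA i j w) (hε : ε i j = ∅) :
    ∀ q, T.onPath w j q → lam q = ∅ := by
  intro q hq
  by_contra h
  obtain ⟨k, hk⟩ := Finset.nonempty_iff_ne_empty.mpr h
  have := (hexp i j hne w hw k).mpr ⟨q, hq, hk⟩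
  rw [hε] at this
  simp at this

end PhyloTree

/-- The concrete tree `((x,y),(x',y'))`: root `0`, inner vertices `1, 2`,
leaves `3, 4` (children of `1`) and `5, 6` (children of `2`). -/
abbrev T0 : PhyloTree (Fin 4) where
  V := Fin 7
  fintypeV := inferInstance
  root := 0
  parent := ![0, 0, 0, 1, 1, 2, 2]
  leaf := ![3, 4, 5, 6]
  parent_root := rfl
  reach := fun v => ⟨2, by revert v; decide⟩
  leaf_inj := by decide
  leaf_iff := by decide
  phylo := by decide

def lam0 : Fin 7 → Finset (Fin 1) := ![∅, {0}, {0}, ∅, ∅, ∅, ∅]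

def eps0 : Fin 4 → Fin 4 → Finset (Fin 1) :=
  ![![∅, ∅, {0}, {0}], ![∅, ∅, {0}, {0}], ![{0}, {0}, ∅, ∅], ![{0}, {0}, ∅, ∅]]

lemma T0_pp (w : Fin 7) : T0.parent (T0.parent w) = 0 := by revert w; decide

lemma T0_anc_iff (v w : Fin 7) :
    T0.anc v w ↔ (v = w ∨ v = T0.parent w ∨ v = 0) := by
  constructor
  · rintro ⟨n, hn⟩
    have key : ∀ n (w : Fin 7), T0.parent^[n] w = w ∨ T0.parent^[n] w = T0.parent w ∨
        T0.parent^[n] w = 0 := by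
      intro n
      induction n with
      | zero => intro w; left; rfl
      | succ n ih =>
        intro w
        rw [Function.iterate_succ_apply']
        rcases ih w with h | h | h <;> rw [h]
        · right; left; rfl
        · right; right; exact T0_pp w
        · right; right; decide
    rcases key n w with h | h | h <;> rw [hn] at h <;> tauto
  · rintro (rfl | rfl | rfl)
    · exact ⟨0, rfl⟩
    · exact ⟨1, rfl⟩
    · exact ⟨2, T0_pp w⟩

/-- There is an edge-labeled tree on four leaves, shaped
`((x,y),(x',y'))` with empty labels exactly on the four cherry (leaf) edges and
nonempty labels on the two edges incident to the root, whose explained Fitch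
map `ε` satisfies: every leaf `x` has a leaf `y ≠ x` with `ε(x,y) = ∅`, yet no
tree explaining `ε` satisfies condition (C). -/
theorem statement13 :
    ∃ (L N : Type) (T : PhyloTree L) (lam : T.V → Finset N)
      (ε : L → L → Finset N),
      T.ExplainsEps lam ε ∧
      Nat.card L = 4 ∧
      (∀ v : T.V, T.parent v ≠ v → (lam v = ∅ ↔ T.isLeaf v)) ∧
      (∀ v : T.V, ¬ T.isLeaf v → v = T.root ∨ T.parent v = T.root) ∧
      (∀ x : L, ∃ y : L, y ≠ x ∧ ε x y = ∅) ∧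
      ¬ ∃ (T' : PhyloTree L) (lam' : T'.V → Finset N),
          T'.ExplainsEps lam' ε ∧ T'.CondC lam' := by
  refine ⟨Fin 4, Fin 1, T0, lam0, eps0, ?_, by simp, ?_, ?_, by decide, ?_⟩
  · -- ExplainsEps
    simp only [PhyloTree.ExplainsEps, PhyloTree.isLCA, PhyloTree.onPath, T0_anc_iff]
    set_option synthInstance.maxSize 5000 in
    set_option maxHeartbeats 1000000 in
    decide
  · simp only [PhyloTree.isLeaf]
    decide
  · simp only [PhyloTree.isLeaf]
    decide
  · rintro ⟨T', lam', hexp, hC⟩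
    obtain ⟨u, hu⟩ := T'.lca_exists 0 1
    obtain ⟨u', hu'⟩ := T'.lca_exists 2 3
    obtain ⟨v, hv⟩ := T'.lca_exists 0 2
    have hA01 : ∀ q, T'.onPath u 0 q → lam' q = ∅ :=
      T'.emptyPath hexp (by decide) (T'.isLCA_symm hu) (by decide)
    have hA32 : ∀ q, T'.onPath u' 2 q → lam' q = ∅ :=
      T'.emptyPath hexp (by decide) (T'.isLCA_symm hu') (by decide)
    -- v is an ancestor of u
    have hvu : T'.anc v u := by
      rcases T'.anc_comp hv.1 hu.1 with h | h
      · exact h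
      · by_cases huv : u = v
        · exact ⟨0, huv⟩
        · exfalso
          obtain ⟨p, hp, hpl⟩ := (hexp 2 0 (by decide) v (T'.isLCA_symm hv) 0).mp (by decide)
          have hp' : T'.onPath u 0 p := by
            refine ⟨T'.anc_trans h hp.1, ?_, hp.2.2⟩
            intro hpu
            rw [hpu] at hp
            exact huv (T'.anc_antisymm h hp.1)
          have := hA01 p hp'
          rw [this] at hpl
          simp at hpl
    -- v is an ancestor of u'
    have hvu' : T'.anc v u' := by
      rcases T'.anc_comp hv.2.1 hu'.1 with h | h
      · exact h
      · by_cases huv : u' = v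
        · exact ⟨0, huv⟩
        · exfalso
          obtain ⟨p, hp, hpl⟩ := (hexp 0 2 (by decide) v hv 0).mp (by decide)
          have hp' : T'.onPath u' 2 p := by
            refine ⟨T'.anc_trans h hp.1, ?_, hp.2.2⟩
            intro hpu
            rw [hpu] at hp
            exact huv (T'.anc_antisymm h hp.1)
          have := hA32 p hp'
          rw [this] at hpl
          simp at hpl
    have hvleaf : ∀ i : Fin 4, T'.anc v (T'.leaf i) := by
      intro i
      fin_cases i
      · exact T'.anc_trans hvu hu.1
      · exact T'.anc_trans hvu hu.2.1
      · exact T'.anc_trans hvu' hu'.1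
      · exact T'.anc_trans hvu' hu'.2.1
    obtain ⟨z, hz1, hz2⟩ := T'.descend hC v
    have hpartner : ∀ z : Fin 4, ∃ z' : Fin 4, z' ≠ z ∧ (0 : Fin 1) ∈ eps0 z' z := by
      decide
    obtain ⟨z', hne', hmem⟩ := hpartner z
    obtain ⟨m, hm⟩ := T'.lca_exists z' z
    have hvm : T'.anc v m := hm.2.2 v (hvleaf z') (hvleaf z)
    obtain ⟨p, hp, hpl⟩ := (hexp z' z hne' m hm 0).mp hmem
    have hpv : p ≠ v := by
      intro h
      apply hp.2.1
      rw [h]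
      exact T'.anc_antisymm hvm (by rw [← h]; exact hp.1)
    have := hz2 p (T'.anc_trans hvm hp.1) hpv hp.2.2
    rw [this] at hpl
    simp at hpl
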